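/- arXiv:1006.0440 — 2 statements merged into one kernel-verified Lean document; each statement's English description precedes it below -/
import Mathlib

section
/- Let H be the 2-dimensional irreducible sl(2,ℂ)-representation and T₀ : Sym²H → H a linear map such that its dual T₀* : H → Sym²H (with respect to the natural invariant pairings) sends every vector ax+by to a scalar multiple of (ax+by)². Then T₀ = 0. -/
/-- Coefficients of `(a·x + b·y)²` in the basis `x², x·y, y²` of `Sym²H`. -/
def sqv (a b : ℂ) : Fin 3 → ℂ := ![a ^ 2, 2 * a * b, b ^ 2]

/-- The natural `sl(2,ℂ)`-invariant (symplectic) pairing on `H = ℂ²`. -/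
def pairH (u v : Fin 2 → ℂ) : ℂ := u 0 * v 1 - u 1 * v 0

/-- The induced `sl(2,ℂ)`-invariant pairing on `Sym²H` in the basis `x², x·y, y²`;
it satisfies `pairS (u²) (v²) = (pairH u v)²`. -/
noncomputable def pairS (p q : Fin 3 → ℂ) : ℂ := p 0 * q 2 + p 2 * q 0 - p 1 * q 1 / 2

/-- If `T₀ : Sym²H → H` is a linear map whose adjoint `T₀* : H → Sym²H` (with
respect to the natural invariant pairings) sends every vector `ax + by` to a
scalar multiple of `(ax + by)²`, then `T₀ = 0`. -/
theorem stmt1 (T0 : (Fin 3 → ℂ) →ₗ[ℂ] (Fin 2 → ℂ))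
    (Tstar : (Fin 2 → ℂ) →ₗ[ℂ] (Fin 3 → ℂ))
    (hadj : ∀ (s : Fin 3 → ℂ) (v : Fin 2 → ℂ), pairH (T0 s) v = pairS s (Tstar v))
    (hsq : ∀ a b : ℂ, ∃ lam : ℂ, Tstar ![a, b] = lam • sqv a b) :
    T0 = 0 := by
  obtain ⟨l1, h1⟩ := hsq 1 0
  obtain ⟨l2, h2⟩ := hsq 0 1
  obtain ⟨l3, h3⟩ := hsq 1 1
  have hsum : Tstar ![(1:ℂ), 1] = Tstar ![(1:ℂ), 0] + Tstar ![(0:ℂ), 1] := by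
    rw [← map_add]
    congr 1
    funext i
    fin_cases i <;> simp
  rw [h1, h2, h3] at hsum
  have e0 := congrFun hsum 0
  have e1 := congrFun hsum 1
  have e2 := congrFun hsum 2
  simp [sqv] at e0 e1 e2
  have hl1 : l1 = 0 := e1 ▸ e0.symm
  have hl2 : l2 = 0 := e1 ▸ e2.symm
  have hTz : ∀ v : Fin 2 → ℂ, Tstar v = 0 := by
    intro v
    have hv : v = v 0 • ![(1:ℂ), 0] + v 1 • ![(0:ℂ), 1] := by
      funext i; fin_cases i <;> simp
    rw [hv, map_add, map_smul, map_smul, h1, h2, hl1, hl2]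
    simp
  have hT0 : ∀ s : Fin 3 → ℂ, T0 s = 0 := by
    intro s
    have ha := hadj s ![0, 1]
    have hb := hadj s ![1, 0]
    rw [hTz] at ha hb
    simp [pairH, pairS] at ha hb
    funext i
    fin_cases i
    · simpa using ha
    · simpa using hb
  exact LinearMap.ext hT0
end

section
/- Let V be a finite-dimensional representation of sl(2,ℂ) isomorphic to a direct sum of copies of the 2-dimensional irreducible representation (i.e., of pure weight 1). Let R be the set of r ∈ sl(2,ℂ) with dim(r·V) = (1/2)·dim V. If ξ ∈ Λ²V* is an sl(2,ℂ)-invariant alternating 2-form which vanishes on (x·V) × (y·V) for two distinct elements x, y ∈ ℙR, then ξ = 0. -/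
/-! A nonzero `r ∈ sl(2,ℂ)` with `dim (r·V) = n` is nilpotent: `det r = 0`. If two nilpotent
elements `x, y` had `tr (x y) = 0`, they would span a totally isotropic subspace of the
nondegenerate quadratic space `(sl(2,ℂ), det)`, which is at most a line; so `tr (x y) ≠ 0`.
For traceless `2×2` matrices `x y + y x = tr (x y) • 1`, while invariance and the vanishing
on `x·V × y·V` (and, by alternation, on `y·V × x·V`) give `ξ ((x y + y x) v, w) = 0`.
Hence `tr (x y) • ξ = 0`. -/

/-- The diagonal action of a `2×2` matrix (an element of `sl(2,ℂ)` when traceless)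
on `V = (ℂ²)^⊕n`, the direct sum of `n` copies of the standard representation. -/
noncomputable def act (n : ℕ) (r : Matrix (Fin 2) (Fin 2) ℂ) :
    (Fin n → Fin 2 → ℂ) →ₗ[ℂ] (Fin n → Fin 2 → ℂ) :=
  LinearMap.pi fun i => (Matrix.mulVecLin r).comp (LinearMap.proj i)

namespace Matrix

theorem exists_eq_of_trace_eq_zero {R : Type*} [CommRing R] {x : Matrix (Fin 2) (Fin 2) R}
    (hx : x.trace = 0) : ∃ p q r : R, x = !![p, q; r, -p] := by
  rw [trace_fin_two] at hx
  refine ⟨x 0 0, x 0 1, x 1 0, ?_⟩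
  rw [← eq_neg_of_add_eq_zero_right hx]
  exact eta_fin_two x

theorem mul_add_mul_eq_trace_mul_smul_one {R : Type*} [CommRing R]
    {x y : Matrix (Fin 2) (Fin 2) R} (hx : x.trace = 0) (hy : y.trace = 0) :
    x * y + y * x = (x * y).trace • 1 := by
  obtain ⟨p, q, r, rfl⟩ := exists_eq_of_trace_eq_zero hx
  obtain ⟨a, b, c, rfl⟩ := exists_eq_of_trace_eq_zero hy
  ext i j
  fin_cases i <;> fin_cases j <;> simp <;> ring

theorem exists_eq_smul_of_det_eq_zero_of_trace_mul_eq_zero {K : Type*} [Field K]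
    {x y : Matrix (Fin 2) (Fin 2) K} (hx : x.trace = 0) (hy : y.trace = 0)
    (hxd : x.det = 0) (hyd : y.det = 0) (hxy : (x * y).trace = 0) (hx0 : x ≠ 0) :
    ∃ t : K, y = t • x := by
  obtain ⟨p, q, r, rfl⟩ := exists_eq_of_trace_eq_zero hx
  obtain ⟨a, b, c, rfl⟩ := exists_eq_of_trace_eq_zero hy
  rw [det_fin_two_of] at hxd hyd
  rw [mul_fin_two, trace_fin_two_of] at hxy
  have hu : ![p, q, r] ≠ 0 := by
    intro hu
    obtain ⟨rfl, rfl, rfl⟩ : p = 0 ∧ q = 0 ∧ r = 0 := by simpa using hu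
    exact hx0 (by ext i j; fin_cases i <;> fin_cases j <;> simp)
  -- each 2×2 minor of the two coordinate vectors squares to a combination of `hxd`, `hyd`, `hxy`
  have hcross : ![p, q, r] ⨯₃ ![a, b, c] = 0 := by
    have h₁ : q * c - r * b = 0 := eq_zero_of_pow_eq_zero (n := 2) <| by
      linear_combination (q * c + r * b - 2 * p * a) * hxy + 4 * b * c * hxd - 4 * p ^ 2 * hyd
    have h₂ : r * a - p * c = 0 := eq_zero_of_pow_eq_zero (n := 2) <| by
      linear_combination -r ^ 2 * hyd - c ^ 2 * hxd - r * c * hxy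
    have h₃ : p * b - q * a = 0 := eq_zero_of_pow_eq_zero (n := 2) <| by
      linear_combination -q ^ 2 * hyd - b ^ 2 * hxd - q * b * hxy
    simp [cross_apply, h₁, h₂, h₃]
  obtain ⟨t, ht⟩ : ∃ t : K, t • ![p, q, r] = ![a, b, c] := by
    by_contra! h
    exact crossProduct_ne_zero_iff_linearIndependent.mpr
      ((LinearIndependent.pair_iff' hu).mpr h) hcross
  obtain ⟨rfl, rfl, rfl⟩ : t * p = a ∧ t * q = b ∧ t * r = c := by simpa using ht
  exact ⟨t, by simp [smul_of]⟩

end Matrix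

theorem LinearMap.IsAlt.apply_mul_add_mul_apply_eq_zero {R M N : Type*} [CommRing R]
    [AddCommGroup M] [Module R M] [AddCommGroup N] [Module R N] {B : M →ₗ[R] M →ₗ[R] N}
    (hB : B.IsAlt) {X Y : Module.End R M} (hX : ∀ v w, B (X v) w + B v (X w) = 0)
    (hY : ∀ v w, B (Y v) w + B v (Y w) = 0) (hXY : ∀ v w, B (X v) (Y w) = 0) (v w : M) :
    B ((X * Y + Y * X) v) w = 0 := by
  have hXYv : B (X (Y v)) w = 0 := by
    rw [eq_neg_of_add_eq_zero_left (hX _ _), hB.eq_iff.mp (hXY w v), neg_zero]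
  have hYXv : B (Y (X v)) w = 0 := by
    rw [eq_neg_of_add_eq_zero_left (hY _ _), hXY, neg_zero]
  simp [hXYv, hYXv]

section act

variable {n : ℕ}

@[simp]
theorem act_apply (r : Matrix (Fin 2) (Fin 2) ℂ) (v : Fin n → Fin 2 → ℂ) (i : Fin n) :
    act n r v i = r.mulVec (v i) := rfl

theorem act_one : act n 1 = 1 :=
  LinearMap.ext fun v => funext fun i => by simp

theorem act_mul (a b : Matrix (Fin 2) (Fin 2) ℂ) : act n (a * b) = act n a * act n b :=
  LinearMap.ext fun v => funext fun i => by
    simp only [Module.End.mul_apply, act_apply, Matrix.mulVec_mulVec]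

theorem act_add (a b : Matrix (Fin 2) (Fin 2) ℂ) : act n (a + b) = act n a + act n b :=
  LinearMap.ext fun v => funext fun i => by simp [Matrix.add_mulVec]

theorem act_smul (t : ℂ) (a : Matrix (Fin 2) (Fin 2) ℂ) : act n (t • a) = t • act n a :=
  LinearMap.ext fun v => funext fun i => by simp [Matrix.smul_mulVec]

theorem act_zero : act n 0 = 0 :=
  LinearMap.ext fun v => funext fun i => by simp

theorem range_act_eq_top {r : Matrix (Fin 2) (Fin 2) ℂ} (hr : r.det ≠ 0) :
    LinearMap.range (act n r) = ⊤ := by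
  refine LinearMap.range_eq_top.mpr fun w => ⟨act n r⁻¹ w, ?_⟩
  rw [← Module.End.mul_apply, ← act_mul, Matrix.mul_nonsing_inv _ hr.isUnit, act_one]
  rfl

variable (hn : n ≠ 0) {r : Matrix (Fin 2) (Fin 2) ℂ}
  (hr : Module.finrank ℂ (LinearMap.range (act n r)) = n)
include hn hr

theorem ne_zero_of_finrank_range_act : r ≠ 0 := by
  rintro rfl
  rw [act_zero, LinearMap.range_zero, finrank_bot] at hr
  exact hn hr.symm

theorem det_eq_zero_of_finrank_range_act : r.det = 0 := by
  by_contra hdet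
  rw [range_act_eq_top hdet, finrank_top, Module.finrank_pi_fintype, Module.finrank_fin_fun,
    Finset.sum_const, Finset.card_univ, Fintype.card_fin, smul_eq_mul] at hr
  omega

end act

/-- Let `V ≅ H^⊕n` be a direct sum of copies of the standard representation of
`sl(2,ℂ)`, and let `R` be the set of `r ∈ sl(2,ℂ)` with `dim (r·V) = n = ½ dim V`.
If `ξ` is an `sl(2,ℂ)`-invariant alternating 2-form on `V` vanishing on
`(x·V) × (y·V)` for two distinct `x, y ∈ ℙR`, then `ξ = 0`. -/
theorem stmt2 (n : ℕ) (x y : Matrix (Fin 2) (Fin 2) ℂ)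
    (hx : x.trace = 0) (hy : y.trace = 0)
    (hxR : Module.finrank ℂ (LinearMap.range (act n x)) = n)
    (hyR : Module.finrank ℂ (LinearMap.range (act n y)) = n)
    (hdist : ¬ ∃ c : ℂ, y = c • x)
    (ξ : (Fin n → Fin 2 → ℂ) →ₗ[ℂ] (Fin n → Fin 2 → ℂ) →ₗ[ℂ] ℂ)
    (halt : ∀ v, ξ v v = 0)
    (hinv : ∀ g : Matrix (Fin 2) (Fin 2) ℂ, g.trace = 0 →
      ∀ v w, ξ (act n g v) w + ξ v (act n g w) = 0)
    (hvan : ∀ v w, ξ (act n x v) (act n y w) = 0) :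
    ξ = 0 := by
  rcases eq_or_ne n 0 with rfl | hn
  · exact Subsingleton.elim _ _
  have htr : (x * y).trace ≠ 0 := fun h => hdist <|
    Matrix.exists_eq_smul_of_det_eq_zero_of_trace_mul_eq_zero hx hy
      (det_eq_zero_of_finrank_range_act hn hxR) (det_eq_zero_of_finrank_range_act hn hyR) h
      (ne_zero_of_finrank_range_act hn hxR)
  have hsum := LinearMap.IsAlt.apply_mul_add_mul_apply_eq_zero halt (hinv x hx) (hinv y hy) hvan
  simp only [← act_mul, ← act_add, Matrix.mul_add_mul_eq_trace_mul_smul_one hx hy, act_smul,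
    act_one] at hsum
  refine LinearMap.ext fun v => LinearMap.ext fun w => ?_
  simpa [htr] using hsum v w
end
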